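/- Let T ∈ ℕ with T ≥ 1. The simplified trigonometric excursion measure at the special parameters πr = 3T, α₀/r = π/2 satisfies the symmetry P̃_{2T}(t, x) = P̃_{2T}(2T−t, −x) for all integers 0 ≤ t ≤ 2T and all x ∈ ℤ. In particular at t = T the distribution is symmetric: P̃_{2T}(T, x) = P̃_{2T}(T, −x) for all x ∈ ℤ. -/

import Mathlib

open scoped Real

/-- The spatio-temporal region `Λ_{2T}` of the excursion process. -/
def LambdaSet (T : ℕ) : Set (ℤ × ℤ) :=
  {p | Even (p.1 + p.2) ∧
    ((0 ≤ p.1 ∧ p.1 ≤ (T : ℤ) ∧ -p.1 ≤ p.2 ∧ p.2 ≤ p.1) ∨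
     ((T : ℤ) + 1 ≤ p.1 ∧ p.1 ≤ 2 * (T : ℤ) ∧ p.1 - 2 * (T : ℤ) ≤ p.2 ∧
       p.2 ≤ 2 * (T : ℤ) - p.1))}

/-- The normalization constant `c̃₂(t;T)`. -/
noncomputable def ctilde2 (T : ℕ) (t : ℤ) : ℝ :=
  ((∏ n ∈ Finset.Icc (1 : ℤ) t, Real.sin ((n : ℝ) * π / (3 * T))) *
      (∏ n ∈ Finset.Icc (1 : ℤ) (2 * (T : ℤ) - t), Real.sin ((n : ℝ) * π / (3 * T))) /
      ∏ n ∈ Finset.Icc (1 : ℤ) (2 * (T : ℤ)), Real.sin ((n : ℝ) * π / (3 * T))) *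
    ∏ n ∈ Finset.Icc (1 : ℤ) (T : ℤ),
      Real.sin ((n : ℝ) * π / (3 * T)) ^ 2 / Real.cos ((2 * (n : ℝ) - (T : ℝ) - 1) * π / (6 * T))

open Classical in
/-- The single-time distribution `P̃_{2T}(t,x)` of the simplified trigonometric
excursion process at the special parameters `πr = 3T`, `α₀/r = π/2`. -/
noncomputable def Ptilde (T : ℕ) (t x : ℤ) : ℝ :=
  if (t, x) ∈ LambdaSet T then
    ctilde2 T t *
      (∏ n ∈ Finset.Icc (1 : ℤ) ((t + x) / 2),
        Real.cos ((2 * (n : ℝ) + 3 * (T : ℝ) - 2 * (t : ℝ) - 1) * π / (6 * T)) /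
          Real.sin ((n : ℝ) * π / (3 * T))) *
      (∏ n ∈ Finset.Icc (1 : ℤ) ((t - x) / 2), 1 / Real.sin ((n : ℝ) * π / (3 * T))) *
      (∏ n ∈ Finset.Icc (1 : ℤ) ((2 * (T : ℤ) - t - x) / 2),
        Real.cos ((2 * (n : ℝ) + 2 * (t : ℝ) - (T : ℝ) - 1) * π / (6 * T)) /
          Real.sin ((n : ℝ) * π / (3 * T))) *
      (∏ n ∈ Finset.Icc (1 : ℤ) ((2 * (T : ℤ) - t + x) / 2),
        1 / Real.sin ((n : ℝ) * π / (3 * T)))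
  else 0

/-! The reflection `(t, x) ↦ (2T - t, -x)` maps `Λ_{2T}` onto itself, leaves `c̃₂(t;T)` unchanged,
and exchanges the four products of `P̃_{2T}` in pairs: the two `1/sin` products trade their ranges,
and the two cosine products trade both their ranges and their phases `3T - 2t ↔ 2t - T`. -/

theorem mem_LambdaSet_reflect_iff (T : ℕ) (t x : ℤ) :
    (2 * (T : ℤ) - t, -x) ∈ LambdaSet T ↔ (t, x) ∈ LambdaSet T := by
  simp only [LambdaSet, Set.mem_ofPred_eq, Int.even_iff]
  omega

theorem ctilde2_reflect (T : ℕ) (t : ℤ) : ctilde2 T (2 * (T : ℤ) - t) = ctilde2 T t := by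
  rw [ctilde2, ctilde2, sub_sub_cancel, mul_comm (∏ n ∈ Finset.Icc (1 : ℤ) t, _)]

theorem Ptilde_reflect (T : ℕ) (t x : ℤ) : Ptilde T (2 * (T : ℤ) - t) (-x) = Ptilde T t x := by
  unfold Ptilde
  rw [mem_LambdaSet_reflect_iff]
  split_ifs
  · have cos_arg₁ (n : ℝ) : 2 * n + 3 * (T : ℝ) - 2 * (2 * T - t) - 1 = 2 * n + 2 * t - T - 1 := by
      ring
    have cos_arg₂ (n : ℝ) : 2 * n + 2 * (2 * (T : ℝ) - t) - T - 1 = 2 * n + 3 * T - 2 * t - 1 := by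
      ring
    simp only [ctilde2_reflect, sub_sub_cancel, sub_neg_eq_add, ← sub_eq_add_neg]
    push_cast
    simp only [cos_arg₁, cos_arg₂]
    ring
  · rfl

theorem Ptilde_symmetry_general (T : ℕ) :
    (∀ t x : ℤ, 0 ≤ t → t ≤ 2 * (T : ℤ) → Ptilde T t x = Ptilde T (2 * (T : ℤ) - t) (-x)) ∧
    (∀ x : ℤ, Ptilde T (T : ℤ) x = Ptilde T (T : ℤ) (-x)) := by
  refine ⟨fun t x _ _ => (Ptilde_reflect T t x).symm, fun x => ?_⟩
  simpa [two_mul] using (Ptilde_reflect T T x).symm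

/-- The time-reflection symmetry `P̃_{2T}(t, x) = P̃_{2T}(2T−t, −x)`; in particular the
distribution at `t = T` is symmetric. -/
theorem Ptilde_symmetry (T : ℕ) (hT : 1 ≤ T) :
    (∀ t x : ℤ, 0 ≤ t → t ≤ 2 * (T : ℤ) → Ptilde T t x = Ptilde T (2 * (T : ℤ) - t) (-x)) ∧
    (∀ x : ℤ, Ptilde T (T : ℤ) x = Ptilde T (T : ℤ) (-x)) :=
  Ptilde_symmetry_general T
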